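/- arXiv:1911.11563 — 2 statements merged into one kernel-verified Lean document; each statement's English description precedes it below -/
import Mathlib

section
/- Let n ≥ 1, μ : ZMod n → ℤ, and let ν : ZMod n → ℕ satisfy Σ_{j ∈ ZMod n} ν(j) = 2. Define N(a,i) = Σ_{j=0}^{i−1} ν(a+j) for a ∈ ZMod n, i ≥ 0, and the degree |ξ_{a,i}| = μ(a) − μ(a+i) + N(a,i) − 1. In the free ℤ-algebra on generators ξ_{a,i} (a ∈ ZMod n, i ≥ 1), define ∂ξ_{a,i} = δ_{i,n}·1 + Σ_{i₁+i₂=i, i₁,i₂≥1} (−1)^{|ξ_{a,i₁}|−1} ξ_{a,i₁} ξ_{a+i₁,i₂} and extend ∂ as a graded derivation of degree −1. Then ∂(∂ξ_{a,i}) = 0 for all a and i ≥ 1. -/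
private lemma aux_sum_range_zmod (n : ℕ) [NeZero n] (f : ZMod n → ℕ) :
    ∑ j ∈ Finset.range n, f (j : ZMod n) = ∑ j : ZMod n, f j := by
  refine Finset.sum_nbij' (fun j => (j : ZMod n)) (fun j => j.val) ?_ ?_ ?_ ?_ ?_
  · intros; exact Finset.mem_univ _
  · intro b _; exact Finset.mem_range.2 b.val_lt
  · intro a ha; exact ZMod.val_cast_of_lt (Finset.mem_range.1 ha)
  · intro b _; exact ZMod.natCast_rightInverse b
  · intros; rfl

private lemma aux_sign (d : ℤ) :
    (Int.negOnePow (d - 1) : ℤ) * (Int.negOnePow d : ℤ) = -1 := by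
  rw [← Units.val_mul, ← Int.negOnePow_add, Int.negOnePow_odd _ ⟨d - 1, by ring⟩]; rfl

/-- the differential of the internal DGA of a vertex squares to zero on
generators (one level of the graded-derivation rule unrolled). -/
theorem internal_dga_differential_squares_to_zero
    (n : ℕ) [NeZero n] (hn : 1 ≤ n) (μ : ZMod n → ℤ) (ν : ZMod n → ℕ)
    (hν : ∑ j : ZMod n, ν j = 2)
    (N : ZMod n → ℕ → ℕ)
    (hN : ∀ (a : ZMod n) (i : ℕ), N a i = ∑ j ∈ Finset.range i, ν (a + (j : ZMod n)))
    (deg : ZMod n → ℕ → ℤ)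
    (hdeg : ∀ (a : ZMod n) (i : ℕ),
      deg a i = μ a - μ (a + (i : ZMod n)) + (N a i : ℤ) - 1)
    (D : ZMod n → ℕ → FreeAlgebra ℤ (ZMod n × ℕ))
    (hD : ∀ (a : ZMod n) (i : ℕ), 1 ≤ i → D a i =
      (if i = n then 1 else 0) +
      ∑ i₁ ∈ Finset.Ioo 0 i,
        (Int.negOnePow (deg a i₁ - 1) : ℤ) •
          (FreeAlgebra.ι ℤ (a, i₁) * FreeAlgebra.ι ℤ (a + (i₁ : ZMod n), i - i₁)))
    (a : ZMod n) (i : ℕ) (hi : 1 ≤ i) :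
    ∑ i₁ ∈ Finset.Ioo 0 i,
      (Int.negOnePow (deg a i₁ - 1) : ℤ) •
        (D a i₁ * FreeAlgebra.ι ℤ (a + (i₁ : ZMod n), i - i₁) +
          (Int.negOnePow (deg a i₁) : ℤ) •
            (FreeAlgebra.ι ℤ (a, i₁) * D (a + (i₁ : ZMod n)) (i - i₁))) = 0 := by
  classical
  -- N over a full turn is 2
  have hNn : ∀ b : ZMod n, N b n = 2 := by
    intro b
    rw [hN, aux_sum_range_zmod n (fun j => ν (b + j)), ← hν]
    exact Fintype.sum_equiv (Equiv.addLeft b) _ _ (fun j => rfl)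
  -- degree of a full-turn generator is 1
  have hdegn : deg a n = 1 := by
    rw [hdeg, hNn]
    simp [ZMod.natCast_self]
  -- additivity of N
  have hNadd : ∀ (b : ZMod n) (j₁ j₂ : ℕ),
      N b j₁ + N (b + (j₁ : ZMod n)) j₂ = N b (j₁ + j₂) := by
    intro b j₁ j₂
    rw [hN, hN, hN, Finset.sum_range_add]
    congr 1
    refine Finset.sum_congr rfl fun k _ => ?_
    congr 1
    push_cast
    ring
  -- additivity of degrees
  have hdegadd : ∀ (b : ZMod n) (j₁ j₂ : ℕ),
      deg b j₁ + deg (b + (j₁ : ZMod n)) j₂ = deg b (j₁ + j₂) - 1 := by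
    intro b j₁ j₂
    rw [hdeg b j₁, hdeg _ j₂, hdeg b (j₁ + j₂), ← hNadd b j₁ j₂, Nat.cast_add,
      ← add_assoc]
    push_cast
    ring
  -- termwise expansion
  have key : ∀ i₁ ∈ Finset.Ioo 0 i,
      (Int.negOnePow (deg a i₁ - 1) : ℤ) •
        (D a i₁ * FreeAlgebra.ι ℤ (a + (i₁ : ZMod n), i - i₁) +
          (Int.negOnePow (deg a i₁) : ℤ) •
            (FreeAlgebra.ι ℤ (a, i₁) * D (a + (i₁ : ZMod n)) (i - i₁))) =
      ((if i₁ = n then (Int.negOnePow (deg a i₁ - 1) : ℤ) •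
          FreeAlgebra.ι ℤ (a + (i₁ : ZMod n), i - i₁) else 0) +
        ∑ j₁ ∈ Finset.Ioo 0 i₁,
          ((Int.negOnePow (deg a i₁ - 1) : ℤ) * (Int.negOnePow (deg a j₁ - 1) : ℤ)) •
            (FreeAlgebra.ι ℤ (a, j₁) * FreeAlgebra.ι ℤ (a + (j₁ : ZMod n), i₁ - j₁) *
              FreeAlgebra.ι ℤ (a + (i₁ : ZMod n), i - i₁))) +
      ((if i - i₁ = n then -(FreeAlgebra.ι ℤ (a, i₁)) else 0) +
        -(∑ j ∈ Finset.Ioo 0 (i - i₁),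
          (Int.negOnePow (deg (a + (i₁ : ZMod n)) j - 1) : ℤ) •
            (FreeAlgebra.ι ℤ (a, i₁) * (FreeAlgebra.ι ℤ (a + (i₁ : ZMod n), j) *
              FreeAlgebra.ι ℤ (a + (i₁ : ZMod n) + (j : ZMod n), i - i₁ - j))))) := by
    intro i₁ hi₁
    obtain ⟨h0, h1⟩ := Finset.mem_Ioo.1 hi₁
    rw [hD a i₁ h0, hD (a + (i₁ : ZMod n)) (i - i₁) (by omega)]
    rw [smul_add, smul_smul, aux_sign (deg a i₁), neg_one_smul]
    congr 1
    · -- first half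
      rw [add_mul, smul_add, Finset.sum_mul, Finset.smul_sum]
      congr 1
      · simp only [ite_mul, one_mul, zero_mul, smul_ite, smul_zero]
      · refine Finset.sum_congr rfl fun j₁ _ => ?_
        rw [smul_mul_assoc, smul_smul]
    · -- second half
      rw [mul_add, neg_add, Finset.mul_sum]
      congr 1
      · simp only [mul_ite, mul_one, mul_zero]
        split <;> simp
      · congr 1
        refine Finset.sum_congr rfl fun j _ => ?_
        rw [mul_smul_comm]
  rw [Finset.sum_congr rfl key]
  rw [Finset.sum_add_distrib, Finset.sum_add_distrib, Finset.sum_add_distrib]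
  rw [add_add_add_comm]
  have hPR :
      (∑ i₁ ∈ Finset.Ioo 0 i, if i₁ = n then (Int.negOnePow (deg a i₁ - 1) : ℤ) •
          FreeAlgebra.ι ℤ (a + (i₁ : ZMod n), i - i₁) else 0) +
      (∑ i₁ ∈ Finset.Ioo 0 i, if i - i₁ = n then -(FreeAlgebra.ι ℤ (a, i₁)) else 0) = 0 := by
    by_cases hni : n < i
    · rw [Finset.sum_ite_eq' (Finset.Ioo 0 i) n
        (fun i₁ => (Int.negOnePow (deg a i₁ - 1) : ℤ) •
          FreeAlgebra.ι ℤ (a + (i₁ : ZMod n), i - i₁)),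
        if_pos (Finset.mem_Ioo.2 ⟨by omega, hni⟩)]
      have : ∀ i₁ ∈ Finset.Ioo 0 i, (if i - i₁ = n then -(FreeAlgebra.ι ℤ (a, i₁)) else 0) =
          (if i₁ = i - n then -(FreeAlgebra.ι ℤ (a, i₁)) else 0) := by
        intro i₁ hi₁
        obtain ⟨u0, u1⟩ := Finset.mem_Ioo.1 hi₁
        exact if_congr (by omega) rfl rfl
      rw [Finset.sum_congr rfl this,
        Finset.sum_ite_eq' (Finset.Ioo 0 i) (i - n) (fun i₁ => -(FreeAlgebra.ι ℤ (a, i₁))),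
        if_pos (Finset.mem_Ioo.2 ⟨by omega, by omega⟩)]
      rw [hdegn]
      simp [ZMod.natCast_self]
    · rw [Finset.sum_ite_eq' (Finset.Ioo 0 i) n
        (fun i₁ => (Int.negOnePow (deg a i₁ - 1) : ℤ) •
          FreeAlgebra.ι ℤ (a + (i₁ : ZMod n), i - i₁)),
        if_neg (by simp only [Finset.mem_Ioo]; omega)]
      have : ∀ i₁ ∈ Finset.Ioo 0 i, (if i - i₁ = n then -(FreeAlgebra.ι ℤ (a, i₁)) else 0) =
          (0 : FreeAlgebra ℤ (ZMod n × ℕ)) := by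
        intro i₁ hi₁
        obtain ⟨u0, u1⟩ := Finset.mem_Ioo.1 hi₁
        exact if_neg (by omega)
      rw [Finset.sum_congr rfl this]
      simp
  have hQS :
      (∑ i₁ ∈ Finset.Ioo 0 i, ∑ j₁ ∈ Finset.Ioo 0 i₁,
        ((Int.negOnePow (deg a i₁ - 1) : ℤ) * (Int.negOnePow (deg a j₁ - 1) : ℤ)) •
          (FreeAlgebra.ι ℤ (a, j₁) * FreeAlgebra.ι ℤ (a + (j₁ : ZMod n), i₁ - j₁) *
            FreeAlgebra.ι ℤ (a + (i₁ : ZMod n), i - i₁))) =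
      (∑ i₁ ∈ Finset.Ioo 0 i, ∑ j ∈ Finset.Ioo 0 (i - i₁),
        (Int.negOnePow (deg (a + (i₁ : ZMod n)) j - 1) : ℤ) •
          (FreeAlgebra.ι ℤ (a, i₁) * (FreeAlgebra.ι ℤ (a + (i₁ : ZMod n), j) *
            FreeAlgebra.ι ℤ (a + (i₁ : ZMod n) + (j : ZMod n), i - i₁ - j)))) := by
    rw [Finset.sum_sigma', Finset.sum_sigma']
    refine Finset.sum_nbij' (fun x => ⟨x.2, x.1 - x.2⟩) (fun x => ⟨x.1 + x.2, x.1⟩)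
      ?_ ?_ ?_ ?_ ?_
    · rintro ⟨i₁, j₁⟩ hx
      simp only [Finset.mem_sigma, Finset.mem_Ioo] at hx ⊢
      omega
    · rintro ⟨p, q⟩ hx
      simp only [Finset.mem_sigma, Finset.mem_Ioo] at hx ⊢
      omega
    · rintro ⟨i₁, j₁⟩ hx
      simp only [Finset.mem_sigma, Finset.mem_Ioo] at hx
      have h : j₁ + (i₁ - j₁) = i₁ := by omega
      simp [h]
    · rintro ⟨p, q⟩ hx
      simp only [Finset.mem_sigma, Finset.mem_Ioo] at hx
      have h : p + q - p = q := by omega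
      simp [h]
    · rintro ⟨i₁, j₁⟩ hx
      simp only [Finset.mem_sigma, Finset.mem_Ioo] at hx
      obtain ⟨⟨-, h1⟩, h2, h3⟩ := hx
      have e1 : a + (j₁ : ZMod n) + ((i₁ - j₁ : ℕ) : ZMod n) = a + (i₁ : ZMod n) := by
        rw [add_assoc, ← Nat.cast_add]
        congr 2
        omega
      have e2 : i - j₁ - (i₁ - j₁) = i - i₁ := by omega
      have e3 : deg (a + (j₁ : ZMod n)) (i₁ - j₁) = deg a i₁ - 1 - deg a j₁ := by
        have h := hdegadd a j₁ (i₁ - j₁)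
        rw [show j₁ + (i₁ - j₁) = i₁ from by omega] at h
        linarith
      have sgn : ((Int.negOnePow (deg a i₁ - 1) : ℤ) * (Int.negOnePow (deg a j₁ - 1) : ℤ)) =
          (Int.negOnePow (deg (a + (j₁ : ZMod n)) (i₁ - j₁) - 1) : ℤ) := by
        rw [← Units.val_mul, ← Int.negOnePow_add, e3]
        exact congrArg _ ((Int.negOnePow_eq_iff _ _).2 ⟨deg a j₁, by ring⟩)
      show _ = (Int.negOnePow (deg (a + (j₁ : ZMod n)) (i₁ - j₁) - 1) : ℤ) •
          (FreeAlgebra.ι ℤ (a, j₁) * (FreeAlgebra.ι ℤ (a + (j₁ : ZMod n), i₁ - j₁) *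
            FreeAlgebra.ι ℤ (a + (j₁ : ZMod n) + ((i₁ - j₁ : ℕ) : ZMod n), i - j₁ - (i₁ - j₁))))
      rw [e1, e2, ← mul_assoc, sgn]
  rw [hPR, zero_add, Finset.sum_neg_distrib, hQS, add_neg_cancel]
end

section
/- Let F be a finite field with q elements. The number of tuples (t₁, t₂, t₃, a₁₂, a₂₃, a₁₃) with t₁, t₂, t₃ ∈ Fˣ and a₁₂, a₂₃, a₁₃ ∈ F satisfying the three equations t₁ + a₁₃ = 0, t₂ + 1 + a₂₃·t₁⁻¹·a₁₂ = 0, and t₃ + t₁⁻¹ + t₁⁻²·a₁₂·t₂⁻¹·a₂₃ = 0, equals (q−1)³ + q(q−1). -/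
/-!
The first equation fixes `a₁₃ = -t₁` and the second fixes `t₂ = -(1 + a₂₃ t₁⁻¹ a₁₂)`; given
these, the third is equivalent to `t₃ = (t₁ t₂)⁻¹`, which is automatically a unit. So a solution
is a free choice of `t₁ ∈ Fˣ` together with `(a, b) = (a₁₂ t₁⁻¹, a₂₃)` subject only to `t₂ ≠ 0`,
i.e. `a b ≠ -1`. The hyperbola `a b = -1` has `q - 1` points, so there are
`(q - 1)(q² - (q - 1)) = (q - 1)³ + q (q - 1)` solutions.
-/

section Hyperbola

variable (F : Type*) [Field F]

def hyperbolaEquivUnits {c : F} (hc : c ≠ 0) : {p : F × F // p.1 * p.2 = c} ≃ Fˣ where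
  toFun p := Units.mk0 p.1.1 (left_ne_zero_of_mul (p.2.symm ▸ hc))
  invFun u := ⟨(u, c * u⁻¹), by simp [mul_left_comm]⟩
  left_inv := by
    rintro ⟨⟨x, y⟩, h⟩
    have hx : x ≠ 0 := left_ne_zero_of_mul (h.symm ▸ hc)
    ext
    · rfl
    · change c * x⁻¹ = y
      rw [← div_eq_mul_inv, ← h]
      exact mul_div_cancel_left₀ y hx
  right_inv u := by ext; rfl

theorem card_mul_eq {c : F} (hc : c ≠ 0) :
    Nat.card {p : F × F // p.1 * p.2 = c} = Nat.card F - 1 := by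
  rw [Nat.card_congr (hyperbolaEquivUnits F hc), Nat.card_units]

theorem card_mul_ne [Finite F] {c : F} (hc : c ≠ 0) :
    Nat.card {p : F × F // p.1 * p.2 ≠ c} = Nat.card F ^ 2 - (Nat.card F - 1) := by
  classical
  have := Fintype.ofFinite F
  rw [← card_mul_eq F hc, sq, ← Nat.card_prod]
  simp only [Nat.card_eq_fintype_card]
  exact Fintype.card_subtype_compl _

end Hyperbola

section Augmentation

variable {F : Type*} [Field F]

/-- Tuples are ordered as `p = (t₁, t₂, t₃, a₁₂, a₂₃, a₁₃)`. -/
abbrev AugmentationSolutions (F : Type*) [Field F] : Type _ :=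
  {p : Fˣ × Fˣ × Fˣ × F × F × F //
    ((p.1 : F) + p.2.2.2.2.2 = 0) ∧
    ((p.2.1 : F) + 1 + p.2.2.2.2.1 * (p.1 : F)⁻¹ * p.2.2.2.1 = 0) ∧
    ((p.2.2.1 : F) + (p.1 : F)⁻¹ +
      ((p.1 : F)⁻¹) ^ 2 * p.2.2.2.1 * (p.2.1 : F)⁻¹ * p.2.2.2.2.1 = 0)}

theorem augmentation_eq_three_iff {t₁ t₂ t₃ a₁₂ a₂₃ : F} (ht₁ : t₁ ≠ 0) (ht₂ : t₂ ≠ 0)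
    (e₂ : t₂ + 1 + a₂₃ * t₁⁻¹ * a₁₂ = 0) :
    t₃ + t₁⁻¹ + t₁⁻¹ ^ 2 * a₁₂ * t₂⁻¹ * a₂₃ = 0 ↔ t₃ = (t₁ * t₂)⁻¹ := by
  have key : t₁⁻¹ ^ 2 * a₁₂ * t₂⁻¹ * a₂₃ = -(t₁ * t₂)⁻¹ - t₁⁻¹ := by
    field_simp
    field_simp at e₂
    linear_combination e₂
  rw [key, ← sub_eq_zero (b := (t₁ * t₂)⁻¹)]
  ring_nf

theorem neg_one_add_ne_zero {x : F} (hx : x ≠ -1) : -(1 + x) ≠ 0 := by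
  contrapose! hx
  linear_combination -hx

def augmentationSolutionsEquiv :
    AugmentationSolutions F ≃ Fˣ × {p : F × F // p.1 * p.2 ≠ -1} where
  toFun x := (x.1.1, ⟨(x.1.2.2.2.1 * (x.1.1 : F)⁻¹, x.1.2.2.2.2.1), by
    obtain ⟨⟨t₁, t₂, t₃, a₁₂, a₂₃, a₁₃⟩, -, e₂, -⟩ := x
    intro h
    apply t₂.ne_zero
    linear_combination e₂ - h⟩)
  invFun x :=
    let t₂ := Units.mk0 _ (neg_one_add_ne_zero x.2.2)
    ⟨(x.1, t₂, (x.1 * t₂)⁻¹, x.2.1.1 * x.1, x.2.1.2, -x.1), by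
      obtain ⟨t₁, ⟨a, b⟩, hab⟩ := x
      have ht₁ : (t₁ : F) ≠ 0 := t₁.ne_zero
      have e₂ : -(1 + a * b) + 1 + b * (t₁ : F)⁻¹ * (a * t₁) = 0 := by
        field_simp
        ring
      refine ⟨add_neg_cancel _, e₂, ?_⟩
      simp only [Units.val_inv_eq_inv_val, Units.val_mul]
      exact (augmentation_eq_three_iff ht₁ (neg_one_add_ne_zero hab) e₂).2 rfl⟩
  left_inv := by
    rintro ⟨⟨t₁, t₂, t₃, a₁₂, a₂₃, a₁₃⟩, e₁, e₂, e₃⟩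
    have ht₁ : (t₁ : F) ≠ 0 := t₁.ne_zero
    have ht₂ : -(1 + a₁₂ * (t₁ : F)⁻¹ * a₂₃) = t₂ := by linear_combination -e₂
    ext
    · rfl
    · exact ht₂
    · simp only [Units.val_inv_eq_inv_val, Units.val_mul, Units.val_mk0, ht₂]
      exact ((augmentation_eq_three_iff ht₁ t₂.ne_zero e₂).1 e₃).symm
    · exact inv_mul_cancel_right₀ ht₁ a₁₂
    · rfl
    · exact (eq_neg_of_add_eq_zero_right e₁).symm
  right_inv := by
    rintro ⟨t₁, ⟨a, b⟩, hab⟩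
    ext
    · rfl
    · exact mul_inv_cancel_right₀ t₁.ne_zero a
    · rfl

end Augmentation

/-- point count of the augmentation equations for the 6-valent vertex
example, over a finite field with `q` elements. -/
theorem six_valent_augmentation_count
    (F : Type*) [Field F] [Fintype F] (q : ℕ) (hq : Fintype.card F = q) :
    Nat.card {p : Fˣ × Fˣ × Fˣ × F × F × F //
        ((p.1 : F) + p.2.2.2.2.2 = 0) ∧
        ((p.2.1 : F) + 1 + p.2.2.2.2.1 * (p.1 : F)⁻¹ * p.2.2.2.1 = 0) ∧
        ((p.2.2.1 : F) + (p.1 : F)⁻¹ +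
          ((p.1 : F)⁻¹) ^ 2 * p.2.2.2.1 * (p.2.1 : F)⁻¹ * p.2.2.2.2.1 = 0)} =
      (q - 1) ^ 3 + q * (q - 1) := by
  rw [Nat.card_congr augmentationSolutionsEquiv, Nat.card_prod, Nat.card_units,
    card_mul_ne F (neg_ne_zero.2 one_ne_zero), Nat.card_eq_fintype_card, hq]
  obtain ⟨n, rfl⟩ : ∃ n, q = n + 1 := ⟨q - 1, by have := hq ▸ Fintype.card_pos (α := F); omega⟩
  have hsq : (n + 1) ^ 2 - n = n ^ 2 + n + 1 := by
    rw [add_sq]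
    omega
  rw [Nat.add_sub_cancel, hsq]
  ring
end
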